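/- arXiv:nlin/0609063 — 2 statements merged into one kernel-verified Lean document; each statement's English description precedes it below -/
import Mathlib

section
/- Let v, u : ℝ → ℝ be smooth functions related by the Miura transformation u = v' + v². If v satisfies the modified KdV equation v_t + v_{xxx} - 6 v² v_x = 0, then u satisfies u_t + u_{xxx} - 6 u u_x = (∂_x + 2v)(v_t + v_{xxx} - 6 v² v_x) = 0, i.e. u is a solution of the KdV equation. -/
/-- Partial derivative in the first (space) variable. -/
noncomputable def pdx (f : ℝ → ℝ → ℝ) : ℝ → ℝ → ℝ := fun x t => deriv (fun y => f y t) x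

/-- Partial derivative in the second (time) variable. -/
noncomputable def pdt (f : ℝ → ℝ → ℝ) : ℝ → ℝ → ℝ := fun x t => deriv (fun s => f x s) t

open Function
open scoped ContDiff

lemma diff_slice_x {f : ℝ → ℝ → ℝ} (hf : ContDiff ℝ ∞ (uncurry f)) (x t : ℝ) :
    DifferentiableAt ℝ (fun y => f y t) x := by
  have : DifferentiableAt ℝ (fun y => uncurry f (y, t)) x :=
    ((hf.differentiable (by norm_num)).comp (differentiable_id.prodMk (differentiable_const t))).differentiableAt
  exact this

lemma diff_slice_t {f : ℝ → ℝ → ℝ} (hf : ContDiff ℝ ∞ (uncurry f)) (x t : ℝ) :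
    DifferentiableAt ℝ (fun s => f x s) t := by
  have : DifferentiableAt ℝ (fun s => uncurry f (x, s)) t :=
    ((hf.differentiable (by norm_num)).comp ((differentiable_const x).prodMk differentiable_id)).differentiableAt
  exact this

lemma pdx_eq {f : ℝ → ℝ → ℝ} (hf : ContDiff ℝ ∞ (uncurry f)) (x t : ℝ) :
    pdx f x t = fderiv ℝ (uncurry f) (x, t) (1, 0) := by
  have h1 : HasFDerivAt (fun y : ℝ => (y, t)) (ContinuousLinearMap.inl ℝ ℝ ℝ) x :=
    hasFDerivAt_prodMk_left x t
  have h2 : HasFDerivAt (uncurry f) (fderiv ℝ (uncurry f) (x, t)) (x, t) :=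
    ((hf.differentiable (by norm_num)) (x, t)).hasFDerivAt
  have h3 := (h2.comp x h1).hasDerivAt
  have : deriv (fun y => f y t) x = ((fderiv ℝ (uncurry f) (x, t)).comp (ContinuousLinearMap.inl ℝ ℝ ℝ)) 1 :=
    h3.deriv
  simpa [pdx] using this

lemma pdt_eq {f : ℝ → ℝ → ℝ} (hf : ContDiff ℝ ∞ (uncurry f)) (x t : ℝ) :
    pdt f x t = fderiv ℝ (uncurry f) (x, t) (0, 1) := by
  have h1 : HasFDerivAt (fun s : ℝ => (x, s)) (ContinuousLinearMap.inr ℝ ℝ ℝ) t :=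
    hasFDerivAt_prodMk_right x t
  have h2 : HasFDerivAt (uncurry f) (fderiv ℝ (uncurry f) (x, t)) (x, t) :=
    ((hf.differentiable (by norm_num)) (x, t)).hasFDerivAt
  have h3 := (h2.comp t h1).hasDerivAt
  have : deriv (fun s => f x s) t = ((fderiv ℝ (uncurry f) (x, t)).comp (ContinuousLinearMap.inr ℝ ℝ ℝ)) 1 :=
    h3.deriv
  simpa [pdt] using this

lemma contDiff_pdx {f : ℝ → ℝ → ℝ} (hf : ContDiff ℝ ∞ (uncurry f)) :
    ContDiff ℝ ∞ (uncurry (pdx f)) := by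
  have he : uncurry (pdx f) = fun p : ℝ × ℝ => fderiv ℝ (uncurry f) p (1, 0) := by
    funext p
    exact pdx_eq hf p.1 p.2
  rw [he]
  exact (contDiff_infty_iff_fderiv.1 hf).2.clm_apply contDiff_const

lemma contDiff_pdt {f : ℝ → ℝ → ℝ} (hf : ContDiff ℝ ∞ (uncurry f)) :
    ContDiff ℝ ∞ (uncurry (pdt f)) := by
  have he : uncurry (pdt f) = fun p : ℝ × ℝ => fderiv ℝ (uncurry f) p (0, 1) := by
    funext p
    exact pdt_eq hf p.1 p.2
  rw [he]
  exact (contDiff_infty_iff_fderiv.1 hf).2.clm_apply contDiff_const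

lemma pdt_pdx_comm {f : ℝ → ℝ → ℝ} (hf : ContDiff ℝ ∞ (uncurry f)) (x t : ℝ) :
    pdt (pdx f) x t = pdx (pdt f) x t := by
  have hd : ContDiff ℝ ∞ (fderiv ℝ (uncurry f)) := (contDiff_infty_iff_fderiv.1 hf).2
  have hdd : DifferentiableAt ℝ (fderiv ℝ (uncurry f)) (x, t) :=
    (hd.differentiable (by norm_num)) (x, t)
  have hsymm : IsSymmSndFDerivAt ℝ (uncurry f) (x, t) :=
    hf.contDiffAt.isSymmSndFDerivAt (by
      rw [show ((2 : WithTop ℕ∞)) = ((2 : ℕ∞) : WithTop ℕ∞) from rfl]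
      rw [minSmoothness_of_isRCLikeNormedField]; exact WithTop.coe_le_coe.2 (le_top (a := (2 : ℕ∞))))
  have hex : uncurry (pdx f) = fun p : ℝ × ℝ => fderiv ℝ (uncurry f) p (1, 0) := by
    funext p; exact pdx_eq hf p.1 p.2
  have het : uncurry (pdt f) = fun p : ℝ × ℝ => fderiv ℝ (uncurry f) p (0, 1) := by
    funext p; exact pdt_eq hf p.1 p.2
  have h1 : pdt (pdx f) x t = fderiv ℝ (uncurry (pdx f)) (x, t) (0, 1) :=
    pdt_eq (contDiff_pdx hf) x t
  have h2 : pdx (pdt f) x t = fderiv ℝ (uncurry (pdt f)) (x, t) (1, 0) :=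
    pdx_eq (contDiff_pdt hf) x t
  have k1 : fderiv ℝ (uncurry (pdx f)) (x, t) (0, 1)
      = fderiv ℝ (fderiv ℝ (uncurry f)) (x, t) (0, 1) (1, 0) := by
    rw [hex]
    have := (hdd.hasFDerivAt.clm_apply (hasFDerivAt_const ((1:ℝ), (0:ℝ)) (x, t))).fderiv
    rw [this]
    simp
  have k2 : fderiv ℝ (uncurry (pdt f)) (x, t) (1, 0)
      = fderiv ℝ (fderiv ℝ (uncurry f)) (x, t) (1, 0) (0, 1) := by
    rw [het]
    have := (hdd.hasFDerivAt.clm_apply (hasFDerivAt_const ((0:ℝ), (1:ℝ)) (x, t))).fderiv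
    rw [this]
    simp
  rw [h1, h2, k1, k2, hsymm.eq]

/-- Miura transformation: if `v` solves mKdV then `u = v_x + v²` solves KdV. -/
theorem miura_transformation
    (v : ℝ → ℝ → ℝ) (hv : ContDiff ℝ (⊤ : ℕ∞) (Function.uncurry v))
    (hmkdv : ∀ x t, pdt v x t + pdx (pdx (pdx v)) x t - 6 * (v x t) ^ 2 * pdx v x t = 0)
    (u : ℝ → ℝ → ℝ) (hu : ∀ x t, u x t = pdx v x t + (v x t) ^ 2) :
    ∀ x t, pdt u x t + pdx (pdx (pdx u)) x t - 6 * u x t * pdx u x t = 0 := by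
  have hv' : ContDiff ℝ ∞ (uncurry v) := hv.of_le (by simp)
  have h1 := contDiff_pdx hv'
  have h2 := contDiff_pdx h1
  have h3 := contDiff_pdx h2
  have ht := contDiff_pdt hv'
  -- first x-derivative of u
  have hux : ∀ a b, pdx u a b = pdx (pdx v) a b + 2 * v a b * pdx v a b := by
    intro a b
    have Hv : HasDerivAt (fun y => v y b) (pdx v a b) a := (diff_slice_x hv' a b).hasDerivAt
    have Hv1 : HasDerivAt (fun y => pdx v y b) (pdx (pdx v) a b) a :=
      (diff_slice_x h1 a b).hasDerivAt
    have H := Hv1.add (Hv.pow 2)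
    have he : (fun y => u y b) = fun y => pdx v y b + (v y b) ^ 2 := funext fun y => hu y b
    have h' : pdx u a b = pdx (pdx v) a b + ↑(2:ℕ) * v a b ^ (2-1) * pdx v a b := by
      show deriv (fun y => u y b) a = _
      rw [he]
      exact H.deriv
    rw [h']; push_cast; ring
  -- second x-derivative of u
  have huxx : ∀ a b, pdx (pdx u) a b
      = pdx (pdx (pdx v)) a b + 2 * pdx v a b ^ 2 + 2 * v a b * pdx (pdx v) a b := by
    intro a b
    have Hv : HasDerivAt (fun y => v y b) (pdx v a b) a := (diff_slice_x hv' a b).hasDerivAt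
    have Hv1 : HasDerivAt (fun y => pdx v y b) (pdx (pdx v) a b) a :=
      (diff_slice_x h1 a b).hasDerivAt
    have Hv2 : HasDerivAt (fun y => pdx (pdx v) y b) (pdx (pdx (pdx v)) a b) a :=
      (diff_slice_x h2 a b).hasDerivAt
    have H := Hv2.add ((Hv.const_mul 2).mul Hv1)
    have he : (fun y => pdx u y b) = fun y => pdx (pdx v) y b + 2 * v y b * pdx v y b :=
      funext fun y => hux y b
    have h' : pdx (pdx u) a b
        = pdx (pdx (pdx v)) a b
          + (2 * pdx v a b * pdx v a b + 2 * v a b * pdx (pdx v) a b) := by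
      show deriv (fun y => pdx u y b) a = _
      rw [he]
      exact H.deriv
    rw [h']; ring
  -- third x-derivative of u
  have huxxx : ∀ a b, pdx (pdx (pdx u)) a b
      = pdx (pdx (pdx (pdx v))) a b + 6 * pdx v a b * pdx (pdx v) a b
        + 2 * v a b * pdx (pdx (pdx v)) a b := by
    intro a b
    have Hv : HasDerivAt (fun y => v y b) (pdx v a b) a := (diff_slice_x hv' a b).hasDerivAt
    have Hv1 : HasDerivAt (fun y => pdx v y b) (pdx (pdx v) a b) a :=
      (diff_slice_x h1 a b).hasDerivAt
    have Hv2 : HasDerivAt (fun y => pdx (pdx v) y b) (pdx (pdx (pdx v)) a b) a :=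
      (diff_slice_x h2 a b).hasDerivAt
    have Hv3 : HasDerivAt (fun y => pdx (pdx (pdx v)) y b) (pdx (pdx (pdx (pdx v))) a b) a :=
      (diff_slice_x h3 a b).hasDerivAt
    have H := (Hv3.add ((Hv1.pow 2).const_mul 2)).add ((Hv.const_mul 2).mul Hv2)
    have he : (fun y => pdx (pdx u) y b)
        = fun y => pdx (pdx (pdx v)) y b + 2 * pdx v y b ^ 2 + 2 * v y b * pdx (pdx v) y b :=
      funext fun y => huxx y b
    have h' : pdx (pdx (pdx u)) a b
        = pdx (pdx (pdx (pdx v))) a b + 2 * (↑(2:ℕ) * pdx v a b ^ (2-1) * pdx (pdx v) a b)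
          + (2 * pdx v a b * pdx (pdx v) a b + 2 * v a b * pdx (pdx (pdx v)) a b) := by
      show deriv (fun y => pdx (pdx u) y b) a = _
      rw [he]
      exact H.deriv
    rw [h']; push_cast; ring
  -- t-derivative of u
  have hut : ∀ a b, pdt u a b = pdt (pdx v) a b + 2 * v a b * pdt v a b := by
    intro a b
    have Hv : HasDerivAt (fun s => v a s) (pdt v a b) b := (diff_slice_t hv' a b).hasDerivAt
    have Hv1 : HasDerivAt (fun s => pdx v a s) (pdt (pdx v) a b) b :=
      (diff_slice_t h1 a b).hasDerivAt
    have H := Hv1.add (Hv.pow 2)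
    have he : (fun s => u a s) = fun s => pdx v a s + (v a s) ^ 2 := funext fun s => hu a s
    have h' : pdt u a b = pdt (pdx v) a b + ↑(2:ℕ) * v a b ^ (2-1) * pdt v a b := by
      show deriv (fun s => u a s) b = _
      rw [he]
      exact H.deriv
    rw [h']; push_cast; ring
  -- x-derivative of the mKdV equation
  have hw : ∀ a b, pdx (pdt v) a b + pdx (pdx (pdx (pdx v))) a b
      - (12 * v a b * pdx v a b ^ 2 + 6 * v a b ^ 2 * pdx (pdx v) a b) = 0 := by
    intro a b
    have Hv : HasDerivAt (fun y => v y b) (pdx v a b) a := (diff_slice_x hv' a b).hasDerivAt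
    have Hv1 : HasDerivAt (fun y => pdx v y b) (pdx (pdx v) a b) a :=
      (diff_slice_x h1 a b).hasDerivAt
    have Hv3 : HasDerivAt (fun y => pdx (pdx (pdx v)) y b) (pdx (pdx (pdx (pdx v))) a b) a :=
      (diff_slice_x h3 a b).hasDerivAt
    have Hvt : HasDerivAt (fun y => pdt v y b) (pdx (pdt v) a b) a :=
      (diff_slice_x ht a b).hasDerivAt
    have H := (Hvt.add Hv3).sub (((Hv.pow 2).const_mul 6).mul Hv1)
    change HasDerivAt (fun y => pdt v y b + pdx (pdx (pdx v)) y b - 6 * (v y b) ^ 2 * pdx v y b)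
      (pdx (pdt v) a b + pdx (pdx (pdx (pdx v))) a b - (6 * (↑(2:ℕ) * v a b ^ (2 - 1) * pdx v a b) * pdx v a b + 6 * v a b ^ 2 * pdx (pdx v) a b)) a at H
    rw [show (fun y => pdt v y b + pdx (pdx (pdx v)) y b - 6 * (v y b) ^ 2 * pdx v y b)
        = fun _ => (0:ℝ) from funext fun y => hmkdv y b] at H
    have h0 := H.unique (hasDerivAt_const a 0)
    push_cast at h0
    linear_combination h0
  intro x t
  rw [hut x t, huxxx x t, hux x t, hu x t, pdt_pdx_comm hv' x t]
  linear_combination (hw x t) + 2 * v x t * (hmkdv x t)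
end

section
/- Let Q ∈ ℝ[λ] be a nonzero real polynomial. Then there exists a complex polynomial A ∈ ℂ[λ] and a sign ε ∈ {1,-1} with Q(λ) = ε · A(λ) · conj(A)(λ) (where conj(A) has conjugated coefficients) if and only if every real root of Q has even multiplicity. -/
/-!
If `Q = ε · A · conj(A)`, then at a real point `x` the factors `A` and `conj(A)` vanish to the
same order, so `Q` vanishes to even order. Conversely, pick any complex root `z` of `Q`: the
real polynomial `(λ - z)(λ - z̄) = A · conj(A)` with `A = λ - z` divides `Q` (for real `z`
because the multiplicity of `z` is even and positive). Dividing it out and inducting on the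
degree reduces to a constant `c`, which is `sign c · (√|c|)²`.
-/

open Polynomial Complex

def IsSignedConjSq (Q : ℝ[X]) : Prop :=
  ∃ (A : ℂ[X]) (ε : ℝ), (ε = 1 ∨ ε = -1) ∧
    Q.map (algebraMap ℝ ℂ) = C (ε : ℂ) * A * A.map (starRingEnd ℂ)

theorem IsSignedConjSq.mul {P Q : ℝ[X]} {B : ℂ[X]}
    (hP : P.map (algebraMap ℝ ℂ) = B * B.map (starRingEnd ℂ)) (hQ : IsSignedConjSq Q) :
    IsSignedConjSq (P * Q) := by
  obtain ⟨A, ε, hε, hA⟩ := hQ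
  exact ⟨B * A, ε, hε, by rw [Polynomial.map_mul, hP, hA, Polynomial.map_mul]; ring⟩

theorem isSignedConjSq_C (c : ℝ) : IsSignedConjSq (C c) := by
  rcases le_or_gt 0 c with hc | hc
  · refine ⟨C (Real.sqrt c : ℂ), 1, Or.inl rfl, ?_⟩
    simp [← C_mul, ← ofReal_mul, Real.mul_self_sqrt hc]
  · refine ⟨C (Real.sqrt (-c) : ℂ), -1, Or.inr rfl, ?_⟩
    simp [← C_mul, ← ofReal_mul, Real.mul_self_sqrt (neg_nonneg.mpr hc.le)]

theorem even_rootMultiplicity_of_map_eq_mul_conj {Q : ℝ[X]} (hQ : Q ≠ 0) {c : ℂ} {A : ℂ[X]}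
    (h : Q.map (algebraMap ℝ ℂ) = C c * A * A.map (starRingEnd ℂ)) (x : ℝ) :
    Even (rootMultiplicity x Q) := by
  have hne : C c * A * A.map (starRingEnd ℂ) ≠ 0 :=
    h ▸ (Polynomial.map_ne_zero_iff (algebraMap ℝ ℂ).injective).mpr hQ
  have hconj : rootMultiplicity (x : ℂ) (A.map (starRingEnd ℂ)) =
      rootMultiplicity (x : ℂ) A := by
    simpa using (eq_rootMultiplicity_map (starRingEnd ℂ).injective (x : ℂ) (p := A)).symm
  rw [eq_rootMultiplicity_map (algebraMap ℝ ℂ).injective x, h, rootMultiplicity_mul hne,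
    rootMultiplicity_mul (left_ne_zero_of_mul hne)]
  simp only [coe_algebraMap, rootMultiplicity_C, hconj, zero_add]
  exact ⟨_, rfl⟩

theorem even_rootMultiplicity_of_mul {R : Type*} [CommRing R] [IsDomain R] {P Q : R[X]}
    (hPQ : P * Q ≠ 0) (hP : ∀ x, Even (rootMultiplicity x P))
    (heven : ∀ x, Even (rootMultiplicity x (P * Q))) (x : R) :
    Even (rootMultiplicity x Q) := by
  have := heven x
  rwa [rootMultiplicity_mul hPQ, Nat.even_add, iff_true_left (hP x)] at this

noncomputable def conjPairPoly (z : ℂ) : ℝ[X] :=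
  X ^ 2 - C (2 * z.re) * X + C (‖z‖ ^ 2)

theorem map_conjPairPoly (z : ℂ) :
    (conjPairPoly z).map (algebraMap ℝ ℂ) = (X - C z) * (X - C z).map (starRingEnd ℂ) := by
  have hmap : (conjPairPoly z).map (algebraMap ℝ ℂ)
      = X ^ 2 - C ((2 * z.re : ℝ) : ℂ) * X + C ((‖z‖ : ℂ) ^ 2) := by simp [conjPairPoly]
  rw [hmap, ← add_conj, map_add, ← mul_conj', map_mul, Polynomial.map_sub, map_X, map_C]
  ring

theorem natDegree_conjPairPoly (z : ℂ) : (conjPairPoly z).natDegree = 2 := by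
  unfold conjPairPoly
  compute_degree!

theorem conjPairPoly_ofReal (x : ℝ) : conjPairPoly x = (X - C x) ^ 2 := by
  simp only [conjPairPoly, ofReal_re, norm_real, Real.norm_eq_abs, sq_abs, map_mul, map_pow,
    C_ofNat]
  ring

theorem conjPairPoly_dvd {Q : ℝ[X]} (hQ : Q ≠ 0)
    (heven : ∀ x : ℝ, Even (rootMultiplicity x Q)) {z : ℂ} (hz : aeval z Q = 0) :
    conjPairPoly z ∣ Q := by
  by_cases him : z.im = 0
  · obtain ⟨x, rfl⟩ : ∃ x : ℝ, (x : ℂ) = z := ⟨z.re, ext rfl him.symm⟩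
    have hroot : Q.IsRoot x := by
      rwa [← coe_algebraMap, aeval_algebraMap_apply, map_eq_zero, coe_aeval_eq_eval] at hz
    have htwo : 2 ≤ rootMultiplicity x Q := by
      obtain ⟨k, hk⟩ := heven x
      have := (rootMultiplicity_pos hQ).mpr hroot
      omega
    rw [conjPairPoly_ofReal]
    exact (pow_dvd_pow _ htwo).trans (pow_rootMultiplicity_dvd Q x)
  · exact Q.quadratic_dvd_of_aeval_eq_zero_im_ne_zero hz him

theorem isSignedConjSq_of_even_rootMultiplicity {Q : ℝ[X]} (hQ : Q ≠ 0)
    (heven : ∀ x : ℝ, Even (rootMultiplicity x Q)) : IsSignedConjSq Q := by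
  induction hn : Q.natDegree using Nat.strong_induction_on generalizing Q with
  | _ n ih =>
  rcases Nat.eq_zero_or_pos n with rfl | hpos
  · rw [eq_C_of_natDegree_eq_zero hn]
    exact isSignedConjSq_C _
  obtain ⟨z, hz⟩ : ∃ z : ℂ, aeval z Q = 0 :=
    IsAlgClosed.exists_aeval_eq_zero ℂ Q (natDegree_pos_iff_degree_pos.mp (hn ▸ hpos)).ne'
  obtain ⟨Q', rfl⟩ := conjPairPoly_dvd hQ heven hz
  have hP : conjPairPoly z ≠ 0 := left_ne_zero_of_mul hQ
  have hQ' : Q' ≠ 0 := right_ne_zero_of_mul hQ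
  have hP_even : ∀ x : ℝ, Even (rootMultiplicity x (conjPairPoly z)) :=
    even_rootMultiplicity_of_map_eq_mul_conj hP (c := 1) (by rw [map_conjPairPoly, C_1, one_mul])
  have hdeg : Q'.natDegree < n := by
    rw [← hn, natDegree_mul hP hQ', natDegree_conjPairPoly]
    omega
  exact (ih _ hdeg hQ' (even_rootMultiplicity_of_mul hQ hP_even heven) rfl).mul
    (map_conjPairPoly z)

/-- A nonzero real polynomial `Q` factors as `Q = ε · A · conj(A)` with `A ∈ ℂ[λ]`
and `ε ∈ {1,-1}` if and only if every real root of `Q` has even multiplicity. -/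
theorem factor_conj_pair_iff_even_real_multiplicity
    (Q : Polynomial ℝ) (hQ : Q ≠ 0) :
    (∃ (A : Polynomial ℂ) (ε : ℝ), (ε = 1 ∨ ε = -1) ∧
        Q.map (algebraMap ℝ ℂ) = C (ε : ℂ) * A * A.map (starRingEnd ℂ)) ↔
    ∀ x : ℝ, Even (rootMultiplicity x Q) :=
  ⟨fun ⟨_, _, _, h⟩ => even_rootMultiplicity_of_map_eq_mul_conj hQ h,
    isSignedConjSq_of_even_rootMultiplicity hQ⟩
end
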